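/- arXiv:1006.1158 — 4 statements merged into one kernel-verified Lean document; each statement's English description precedes it below -/
import Mathlib

section
/- Let $k$ be a field with $\mathrm{char}\,k \neq 2$, let $a \in k \setminus \{0\}$, and let $\sigma$ be the $k$-automorphism of the rational function field $k(x,y)$ defined by $\sigma(x) = a/x$, $\sigma(y) = a/y$. Then $k(x,y)^{\langle \sigma \rangle} = k(u,v)$ where $u = (x-y)/(a-xy)$ and $v = (x+y)/(a+xy)$. -/
/-!
The fixed field of `σ` contains `F = k(u, v)` and misses `x` (as `σ x = a/x ≠ x`). On the other
hand `x` is a root of `(X - x)(X - σ x) = X² - (x + a/x) X + a`, whose coefficients lie in `F`,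
and `y` is a rational function of `u` and `x`; hence `k(x, y) = F(x)` has degree at most `2`
over `F`, which leaves no room for an intermediate field strictly between `F` and `k(x, y)`.
-/

open IntermediateField Polynomial Module

theorem IntermediateField.mem_fixedField_zpowers_iff {k L : Type*} [Field k] [Field L]
    [Algebra k L] {σ : L ≃ₐ[k] L} {z : L} :
    z ∈ fixedField (Subgroup.zpowers σ) ↔ σ z = z :=
  ⟨fun h => h ⟨σ, Subgroup.mem_zpowers σ⟩,
    fun h g => Subgroup.zpowers_le (H := MulAction.stabilizer (L ≃ₐ[k] L) z) |>.mpr h g.2⟩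

theorem IntermediateField.eq_of_le_of_finrank_le_two {K L : Type*} [Field K] [Field L]
    [Algebra K L] {F E : IntermediateField K L} [FiniteDimensional F L] (hFE : F ≤ E)
    (hE : E ≠ ⊤) (hF : finrank F L ≤ 2) : F = E := by
  have hmul := relfinrank_mul_finrank_top hFE
  have hpos : 0 < relfinrank F E * finrank E L := hmul ▸ finrank_pos
  have hE2 : 1 < finrank E L :=
    lt_of_le_of_ne (Nat.pos_of_mul_pos_left hpos) (Ne.symm (mt finrank_eq_one_iff_eq_top.mp hE))
  refine le_antisymm hFE (relfinrank_eq_one_iff.mp ?_)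
  nlinarith [Nat.pos_of_mul_pos_right hpos]

theorem IntermediateField.finrank_le_two_of_adjoin_eq_top {F L : Type*} [Field F] [Field L]
    [Algebra F L] {x : L} (htop : F⟮x⟯ = ⊤) {b c : F}
    (hx : aeval x (X ^ 2 - C b * X + C c) = 0) :
    FiniteDimensional F L ∧ finrank F L ≤ 2 := by
  have hmonic : (X ^ 2 - C b * X + C c : F[X]).Monic := by monicity!
  have hint : IsIntegral F x := ⟨_, hmonic, hx⟩
  have hfr : finrank F L = (minpoly F x).natDegree := by
    rw [← finrank_top', ← htop, adjoin.finrank hint]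
  refine ⟨Module.finite_of_finrank_pos (hfr ▸ minpoly.natDegree_pos hint), hfr ▸ ?_⟩
  exact natDegree_le_of_degree_le
    ((minpoly.degree_le_of_ne_zero F x hmonic.ne_zero hx).trans (by compute_degree!))

theorem IsFractionRing.adjoin_image_eq_top {k A K : Type*} [Field k] [CommRing A] [Algebra k A]
    [Field K] [Algebra k K] [Algebra A K] [IsScalarTower k A K] [IsFractionRing A K] {s : Set A}
    (hs : Algebra.adjoin k s = ⊤) : IntermediateField.adjoin k (algebraMap A K '' s) = ⊤ := by
  have hA : ∀ p : A, algebraMap A K p ∈ IntermediateField.adjoin k (algebraMap A K '' s) := by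
    intro p
    apply algebra_adjoin_le_adjoin
    rw [← IsScalarTower.coe_toAlgHom' k A K, Algebra.adjoin_image, hs]
    exact ⟨p, trivial, rfl⟩
  refine eq_top_iff.mpr fun z _ => ?_
  obtain ⟨p, q, -, rfl⟩ := IsFractionRing.div_surjective (A := A) z
  exact div_mem (hA p) (hA q)

theorem MvPolynomial.algebraMap_fractionRing_ne_zero {σ R : Type*} [CommRing R]
    {p : MvPolynomial σ R} (hp : constantCoeff p ≠ 0) :
    algebraMap _ (FractionRing (MvPolynomial σ R)) p ≠ 0 :=
  (map_ne_zero_iff _ (IsFractionRing.injective _ _)).mpr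
    (ne_of_apply_ne constantCoeff (by rwa [map_zero]))

theorem MvPolynomial.adjoin_range_X_fractionRing_eq_top {σ k : Type*} [Field k] :
    IntermediateField.adjoin k
      (Set.range fun i => algebraMap (MvPolynomial σ k) (FractionRing (MvPolynomial σ k)) (X i))
      = ⊤ := by
  have := IsFractionRing.adjoin_image_eq_top (K := FractionRing (MvPolynomial σ k))
    (adjoin_range_X (R := k) (σ := σ))
  rwa [← Set.range_comp] at this

namespace Yamasaki

variable {L : Type*} [Field L] {A x y : L}

def u (A x y : L) : L := (x - y) / (A - x * y)

def v (A x y : L) : L := (x + y) / (A + x * y)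

theorem map_u {L' F : Type*} [Field L'] [FunLike F L L'] [RingHomClass F L L'] (f : F) :
    f (u A x y) = u (f A) (f x) (f y) := by
  simp [u, map_div₀]

theorem map_v {L' F : Type*} [Field L'] [FunLike F L L'] [RingHomClass F L L'] (f : F) :
    f (v A x y) = v (f A) (f x) (f y) := by
  simp [v, map_div₀]

theorem u_div_div (hA : A ≠ 0) (hx : x ≠ 0) (hy : y ≠ 0) (hd : A - x * y ≠ 0) :
    u A (A / x) (A / y) = u A x y := by
  have : x * y - A ≠ 0 := fun h => hd (by linear_combination -h)
  unfold u; field_simp; ring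

theorem v_div_div (hA : A ≠ 0) (hx : x ≠ 0) (hy : y ≠ 0) (hd : A + x * y ≠ 0) :
    v A (A / x) (A / y) = v A x y := by
  have : x * y + A ≠ 0 := fun h => hd (by linear_combination h)
  unfold v; field_simp; ring

theorem u_add_v_ne_zero (h2 : (2 : L) ≠ 0) (hx : x ≠ 0) (hy : A - y * y ≠ 0)
    (hd₁ : A - x * y ≠ 0) (hd₂ : A + x * y ≠ 0) : u A x y + v A x y ≠ 0 := by
  have key : (u A x y + v A x y) * ((A - x * y) * (A + x * y)) = 2 * x * (A - y * y) := by
    unfold u v; field_simp; ring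
  intro h
  rw [h, zero_mul] at key
  exact mul_ne_zero (mul_ne_zero h2 hx) hy key.symm

-- The coefficient of `x` is the trace `x + A / x`, rewritten in terms of `u` and `v`.
theorem sq_sub_mul_add_eq_zero (h2 : (2 : L) ≠ 0) (hx : x ≠ 0) (hy : A - y * y ≠ 0)
    (hd₁ : A - x * y ≠ 0) (hd₂ : A + x * y ≠ 0) :
    x ^ 2 - 2 * (1 + A * u A x y * v A x y) / (u A x y + v A x y) * x + A = 0 := by
  have := u_add_v_ne_zero h2 hx hy hd₁ hd₂
  rw [div_mul_eq_mul_div, sub_add_eq_add_sub, sub_eq_zero, eq_div_iff this]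
  unfold u v; field_simp; ring

theorem y_eq_div (hx : A - x * x ≠ 0) (hd : A - x * y ≠ 0) :
    y = (u A x y * A - x) / (u A x y * x - 1) := by
  have hux : u A x y * x - 1 = -(A - x * x) / (A - x * y) := by
    unfold u; field_simp; ring
  rw [eq_div_iff (hux ▸ div_ne_zero (neg_ne_zero.mpr hx) hd), u, div_mul_eq_mul_div,
    div_mul_eq_mul_div, div_sub_one hd, div_sub' hd, mul_div_assoc', div_eq_div_iff hd hd]
  ring

theorem fixedField_eq_adjoin {k L : Type*} [Field k] [Field L] [Algebra k L]
    (σ : L ≃ₐ[k] L) {a : k} {x y : L} (hgen : adjoin k {x, y} = ⊤) (h2 : (2 : L) ≠ 0)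
    (ha : a ≠ 0) (hx : x ≠ 0) (hy : y ≠ 0) (hxx : algebraMap k L a - x * x ≠ 0)
    (hyy : algebraMap k L a - y * y ≠ 0) (hd₁ : algebraMap k L a - x * y ≠ 0)
    (hd₂ : algebraMap k L a + x * y ≠ 0)
    (hσx : σ x = algebraMap k L a / x) (hσy : σ y = algebraMap k L a / y) :
    fixedField (Subgroup.zpowers σ) =
      adjoin k {u (algebraMap k L a) x y, v (algebraMap k L a) x y} := by
  set A := algebraMap k L a
  have hA : A ≠ 0 := (_root_.map_ne_zero _).mpr ha
  set F := adjoin k {u A x y, v A x y}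
  have huF : u A x y ∈ F := subset_adjoin _ _ (by simp)
  have hvF : v A x y ∈ F := subset_adjoin _ _ (by simp)
  have hFE : F ≤ fixedField (Subgroup.zpowers σ) := by
    rw [adjoin_le_iff]
    rintro _ (rfl | rfl) <;> rw [SetLike.mem_coe, mem_fixedField_zpowers_iff]
    · rw [map_u, hσx, hσy, σ.commutes, u_div_div hA hx hy hd₁]
    · rw [map_v, hσx, hσy, σ.commutes, v_div_div hA hx hy hd₂]
  have hxE : x ∉ fixedField (Subgroup.zpowers σ) := by
    rw [mem_fixedField_zpowers_iff, hσx]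
    exact fun h => hxx (sub_eq_zero.mpr ((div_eq_iff hx).mp h))
  have htop : F⟮x⟯ = ⊤ := by
    have hF : ∀ z ∈ F, z ∈ F⟮x⟯ := fun z hz => F⟮x⟯.algebraMap_mem (⟨z, hz⟩ : F)
    have hxF : x ∈ F⟮x⟯ := mem_adjoin_simple_self F x
    have hyF : y ∈ F⟮x⟯ := by
      rw [y_eq_div hxx hd₁]
      exact div_mem (sub_mem (mul_mem (hF _ huF) (hF _ (F.algebraMap_mem a))) hxF)
        (sub_mem (mul_mem (hF _ huF) hxF) (one_mem _))
    rw [← restrictScalars_eq_top_iff (K := k), eq_top_iff, ← hgen, adjoin_le_iff]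
    rintro _ (rfl | rfl) <;> assumption
  have hq : aeval x (X ^ 2 - C (2 * (1 + algebraMap k F a * ⟨_, huF⟩ * ⟨_, hvF⟩) /
      (⟨_, huF⟩ + ⟨_, hvF⟩)) * X + C (algebraMap k F a)) = 0 := by
    simpa [A, show ((2 : F) : L) = 2 from rfl] using sq_sub_mul_add_eq_zero h2 hx hyy hd₁ hd₂
  obtain ⟨_, hfin⟩ := finrank_le_two_of_adjoin_eq_top htop hq
  exact (eq_of_le_of_finrank_le_two hFE (fun h => hxE (h ▸ mem_top)) hfin).symm

end Yamasaki

/-- **Yamasaki's theorem.** Let `k` be a field with `char k ≠ 2`, `a ∈ k \ {0}`, and `σ`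
the `k`-automorphism of the rational function field `k(x,y)` with `σ(x) = a/x`, `σ(y) = a/y`.
Then `k(x,y)^⟨σ⟩ = k(u,v)` with `u = (x-y)/(a-xy)`, `v = (x+y)/(a+xy)`. -/
theorem stmt_1 {k : Type*} [Field k] (hchar : ringChar k ≠ 2) (a : k) (ha : a ≠ 0)
    (x y : FractionRing (MvPolynomial (Fin 2) k))
    (hx : x = algebraMap (MvPolynomial (Fin 2) k) (FractionRing (MvPolynomial (Fin 2) k))
      (MvPolynomial.X 0))
    (hy : y = algebraMap (MvPolynomial (Fin 2) k) (FractionRing (MvPolynomial (Fin 2) k))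
      (MvPolynomial.X 1))
    (σ : FractionRing (MvPolynomial (Fin 2) k) ≃ₐ[k] FractionRing (MvPolynomial (Fin 2) k))
    (hσx : σ x = algebraMap k (FractionRing (MvPolynomial (Fin 2) k)) a / x)
    (hσy : σ y = algebraMap k (FractionRing (MvPolynomial (Fin 2) k)) a / y) :
    IntermediateField.fixedField (Subgroup.zpowers σ) =
      IntermediateField.adjoin k
        {(x - y) / (algebraMap k (FractionRing (MvPolynomial (Fin 2) k)) a - x * y),
         (x + y) / (algebraMap k (FractionRing (MvPolynomial (Fin 2) k)) a + x * y)} := by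
  have hinj := IsFractionRing.injective (MvPolynomial (Fin 2) k)
    (FractionRing (MvPolynomial (Fin 2) k))
  have hC : ∀ c : k, algebraMap (MvPolynomial (Fin 2) k) (FractionRing (MvPolynomial (Fin 2) k))
      (MvPolynomial.C c) = algebraMap k (FractionRing (MvPolynomial (Fin 2) k)) c :=
    fun c => (IsScalarTower.algebraMap_apply _ _ _ c).symm
  have h2 : (2 : FractionRing (MvPolynomial (Fin 2) k)) ≠ 0 := by
    rw [← map_ofNat (algebraMap k (FractionRing (MvPolynomial (Fin 2) k)))]
    exact (_root_.map_ne_zero _).mpr (Ring.two_ne_zero hchar)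
  have hgen : adjoin k {x, y} = ⊤ := by
    convert MvPolynomial.adjoin_range_X_fractionRing_eq_top (k := k) (σ := Fin 2) using 2
    ext z
    simp [Fin.exists_fin_two, hx, hy, eq_comm]
  subst hx hy
  refine Yamasaki.fixedField_eq_adjoin σ hgen h2 ha
    ((map_ne_zero_iff _ hinj).mpr (MvPolynomial.X_ne_zero 0))
    ((map_ne_zero_iff _ hinj).mpr (MvPolynomial.X_ne_zero 1)) ?_ ?_ ?_ ?_ hσx hσy <;>
  · simp only [← hC, ← map_mul, ← map_sub, ← map_add]
    exact MvPolynomial.algebraMap_fractionRing_ne_zero (by simp [ha])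
end

section
/- Let $k$ be a field with $\mathrm{char}\,k \neq 2, 3$ such that $\sqrt{-2} \in k$. The matrices $A = \frac{\sqrt{-2}}{2}\begin{pmatrix} 1&1&0&0 \\ -1&1&0&0 \\ 0&0&-1&1 \\ 0&0&-1&-1 \end{pmatrix}$, $B = \begin{pmatrix} 0&0&0&-1 \\ 0&0&1&0 \\ 0&-1&0&0 \\ 1&0&0&0 \end{pmatrix}$, $C = \frac{1}{2}\begin{pmatrix} 1&1&1&1 \\ -1&1&-1&1 \\ -1&1&1&-1 \\ -1&-1&1&1 \end{pmatrix}$ satisfy the defining relations of the binary octahedral group $\widehat{S_4}$: $A^8 = B^4 = C^6 = I$, $BAB^{-1} = A^{-1}$, $CBC^{-1} = A^2$, $(AC)^2 = -A^2B$. -/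
/-!
Write `A = (√-2/2) • a`, `C = 2⁻¹ • c` with integer matrices `a`, `c`, and let `J = A²`.
Every relation then follows formally from a handful of identities between integer matrices
(`a² = -2J`, `J² = B² = -1`, `c³ = -8`, `BaB = Ja`, `cB = Jc`, `(ac)² = 8JB`), once the scalar
factors are collected using `(√-2)² = -2`. In particular `A⁴ = B² = C³ = -1`, which gives the
orders and the inverses `A⁻¹ = -A³`, `B⁻¹ = -B`, `C⁻¹ = -C²`.
-/

theorem pow_mul_two_eq_one_of_pow_eq_neg_one {M : Type*} [Monoid M] [HasDistribNeg M] {x : M}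
    {n : ℕ} (h : x ^ n = -1) : x ^ (n * 2) = 1 := by
  rw [pow_mul, h, neg_one_sq]

theorem Matrix.inv_eq_neg_pow_of_pow_succ_eq_neg_one {n R : Type*} [Fintype n] [DecidableEq n]
    [CommRing R] {M : Matrix n n R} {m : ℕ} (h : M ^ (m + 1) = -1) : M⁻¹ = -M ^ m :=
  Matrix.inv_eq_right_inv (by rw [mul_neg, ← pow_succ', h, neg_neg])

namespace BinaryOctahedral

variable (R : Type*) [Ring R]

-- `A = (√-2/2) • matA`, `B = matB`, `C = 2⁻¹ • matC` and `A² = matJ`.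
def matA : Matrix (Fin 4) (Fin 4) R := !![1, 1, 0, 0; -1, 1, 0, 0; 0, 0, -1, 1; 0, 0, -1, -1]

def matB : Matrix (Fin 4) (Fin 4) R := !![0, 0, 0, -1; 0, 0, 1, 0; 0, -1, 0, 0; 1, 0, 0, 0]

def matC : Matrix (Fin 4) (Fin 4) R := !![1, 1, 1, 1; -1, 1, -1, 1; -1, 1, 1, -1; -1, -1, 1, 1]

def matJ : Matrix (Fin 4) (Fin 4) R := !![0, -1, 0, 0; 1, 0, 0, 0; 0, 0, 0, 1; 0, 0, -1, 0]

variable {R}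

theorem matA_sq : matA R ^ 2 = (-2 : R) • matJ R := by
  ext i j
  fin_cases i <;> fin_cases j <;>
    simp [matA, matJ, sq, Matrix.mul_apply, Fin.sum_univ_four] <;> norm_num

theorem matJ_sq : matJ R ^ 2 = -1 := by
  ext i j
  fin_cases i <;> fin_cases j <;> simp [matJ, sq, Matrix.mul_apply, Fin.sum_univ_four]

theorem matB_sq : matB R ^ 2 = -1 := by
  ext i j
  fin_cases i <;> fin_cases j <;> simp [matB, sq, Matrix.mul_apply, Fin.sum_univ_four]

theorem matC_pow_three : matC R ^ 3 = (-8 : R) • 1 := by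
  ext i j
  fin_cases i <;> fin_cases j <;>
    simp [matC, pow_succ, Matrix.mul_apply, Fin.sum_univ_four] <;> norm_num

theorem matB_mul_matA_mul_matB : matB R * matA R * matB R = matJ R * matA R := by
  ext i j
  fin_cases i <;> fin_cases j <;> simp [matA, matB, matJ, Matrix.mul_apply, Fin.sum_univ_four]

theorem matC_mul_matB : matC R * matB R = matJ R * matC R := by
  ext i j
  fin_cases i <;> fin_cases j <;> simp [matC, matB, matJ, Matrix.mul_apply, Fin.sum_univ_four]

theorem matA_mul_matC_sq : (matA R * matC R) ^ 2 = (8 : R) • (matJ R * matB R) := by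
  ext i j
  fin_cases i <;> fin_cases j <;>
    simp [matA, matC, matB, matJ, sq, Matrix.mul_apply, Fin.sum_univ_four] <;> norm_num

variable {K : Type*} [Field K] {s : K}

theorem smul_matA_sq (hs : s ^ 2 = -2) (h2 : (2 : K) ≠ 0) :
    ((s / 2) • matA K) ^ 2 = matJ K := by
  rw [smul_pow, matA_sq, smul_smul,
    show (s / 2) ^ 2 * -2 = 1 by field_simp; linear_combination -hs, one_smul]

theorem smul_matC_pow_three (h2 : (2 : K) ≠ 0) : ((2 : K)⁻¹ • matC K) ^ 3 = -1 := by
  rw [smul_pow, matC_pow_three, smul_smul, show (2 : K)⁻¹ ^ 3 * -8 = -1 by field_simp; norm_num,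
    neg_one_smul]

theorem matB_mul_smul_matA_mul_matB (c : K) :
    matB K * c • matA K * matB K = matJ K * c • matA K := by
  rw [Matrix.mul_smul, Matrix.smul_mul, Matrix.mul_smul, matB_mul_matA_mul_matB]

theorem smul_matC_mul_matB (c : K) : c • matC K * matB K = matJ K * c • matC K := by
  rw [Matrix.smul_mul, Matrix.mul_smul, matC_mul_matB]

theorem smul_matA_mul_smul_matC_sq (hs : s ^ 2 = -2) (h2 : (2 : K) ≠ 0) :
    ((s / 2) • matA K * (2 : K)⁻¹ • matC K) ^ 2 = -(matJ K * matB K) := by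
  rw [Matrix.smul_mul, Matrix.mul_smul, smul_smul, smul_pow, matA_mul_matC_sq, smul_smul,
    show (s / 2 * 2⁻¹) ^ 2 * 8 = -1 by field_simp; linear_combination 8 * hs, neg_one_smul]

end BinaryOctahedral

open BinaryOctahedral in
theorem stmt_8_general {k : Type*} [Field k] (h2 : ringChar k ≠ 2)
    (s : k) (hs : s ^ 2 = -2)
    (A B C : Matrix (Fin 4) (Fin 4) k)
    (hA : A = (s / 2) • !![1, 1, 0, 0; -1, 1, 0, 0; 0, 0, -1, 1; 0, 0, -1, -1])
    (hB : B = !![0, 0, 0, -1; 0, 0, 1, 0; 0, -1, 0, 0; 1, 0, 0, 0])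
    (hC : C = (2 : k)⁻¹ • !![1, 1, 1, 1; -1, 1, -1, 1; -1, 1, 1, -1; -1, -1, 1, 1]) :
    A ^ 8 = 1 ∧ B ^ 4 = 1 ∧ C ^ 6 = 1 ∧
      B * A * B⁻¹ = A⁻¹ ∧ C * B * C⁻¹ = A ^ 2 ∧ (A * C) ^ 2 = -(A ^ 2 * B) := by
  have h2' : (2 : k) ≠ 0 := Ring.two_ne_zero h2
  have hA2 : A ^ 2 = matJ k := hA ▸ smul_matA_sq hs h2'
  have hA4 : A ^ 4 = -1 := by rw [← matJ_sq, ← hA2, ← pow_mul]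
  have hB2 : B ^ 2 = -1 := hB ▸ matB_sq
  have hC3 : C ^ 3 = -1 := hC ▸ smul_matC_pow_three h2'
  have hBAB : B * A * B = A ^ 2 * A := hA2 ▸ hA ▸ hB ▸ matB_mul_smul_matA_mul_matB (s / 2)
  have hCB : C * B = A ^ 2 * C := hA2 ▸ hB ▸ hC ▸ smul_matC_mul_matB 2⁻¹
  have hAC : (A * C) ^ 2 = -(A ^ 2 * B) :=
    hA2 ▸ hA ▸ hB ▸ hC ▸ smul_matA_mul_smul_matC_sq hs h2'
  refine ⟨pow_mul_two_eq_one_of_pow_eq_neg_one hA4, pow_mul_two_eq_one_of_pow_eq_neg_one hB2,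
    pow_mul_two_eq_one_of_pow_eq_neg_one hC3, ?_, ?_, hAC⟩
  · rw [Matrix.inv_eq_neg_pow_of_pow_succ_eq_neg_one (m := 1) hB2,
      Matrix.inv_eq_neg_pow_of_pow_succ_eq_neg_one (m := 3) hA4, pow_one, mul_neg, hBAB,
      ← pow_succ]
  · rw [Matrix.inv_eq_neg_pow_of_pow_succ_eq_neg_one (m := 2) hC3, mul_neg, hCB, mul_assoc,
      ← pow_succ', hC3, mul_neg_one, neg_neg]

/-- If `√-2 ∈ k` and `char k ≠ 2, 3`, the matrices `A, B, C` of Formula (3.3) satisfy the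
defining relations of the binary octahedral group `Ŝ₄`:
`A⁸ = B⁴ = C⁶ = I`, `BAB⁻¹ = A⁻¹`, `CBC⁻¹ = A²`, `(AC)² = -A²B`. -/
theorem stmt_8 {k : Type*} [Field k] (h2 : ringChar k ≠ 2) (h3 : ringChar k ≠ 3)
    (s : k) (hs : s ^ 2 = -2)
    (A B C : Matrix (Fin 4) (Fin 4) k)
    (hA : A = (s / 2) • !![1, 1, 0, 0; -1, 1, 0, 0; 0, 0, -1, 1; 0, 0, -1, -1])
    (hB : B = !![0, 0, 0, -1; 0, 0, 1, 0; 0, -1, 0, 0; 1, 0, 0, 0])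
    (hC : C = (2 : k)⁻¹ • !![1, 1, 1, 1; -1, 1, -1, 1; -1, 1, 1, -1; -1, -1, 1, 1]) :
    A ^ 8 = 1 ∧ B ^ 4 = 1 ∧ C ^ 6 = 1 ∧
      B * A * B⁻¹ = A⁻¹ ∧ C * B * C⁻¹ = A ^ 2 ∧ (A * C) ^ 2 = -(A ^ 2 * B) :=
  stmt_8_general h2 s hs A B C hA hB hC
end

section
/- Let $k$ be a field with $\mathrm{char}\,k \neq 2$, and let $\sigma$ be the $k$-automorphism of $k(u_1, u_2, u_3)$ defined by $\sigma(u_1) = 1/u_1$, $\sigma(u_2) = 1/u_2$, $\sigma(u_3) = u_3/u_1$. Then $k(u_1,u_2,u_3)^{\langle\sigma\rangle} = k(v_1, v_2, v_3)$ where $v_1 = (u_1 - u_2)/(1 - u_1 u_2)$, $v_2 = (u_1 + u_2)/(1 + u_1 u_2)$, and $v_3 = u_3(1 + 1/u_1)$. -/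
/-!
The generators `v₁, v₂, v₃` are `σ`-invariant, so `L = k(v₁, v₂, v₃)` lies in the fixed field.
Conversely `u₂ = (u₁ - v₁) / (1 - v₁ u₁)` and `u₃ = v₃ u₁ / (u₁ + 1)`, so the whole field is
`L(u₁)`, and `u₁ + u₁⁻¹ = 2 (1 + v₁ v₂) / (v₁ + v₂)` lies in `L`, so `u₁` is quadratic over `L`.
The fixed field sits between `L` and `L(u₁)` and misses `u₁` (as `u₁² ≠ 1`), hence it is `L`.
-/

open IntermediateField Polynomial Module

namespace IntermediateField

variable {F E : Type*} [Field F] [Field E] [Algebra F E]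

theorem mem_fixedField_zpowers_iff_s10 {σ : E ≃ₐ[F] E} {x : E} :
    x ∈ fixedField (Subgroup.zpowers σ) ↔ σ x = x :=
  ⟨fun h => h ⟨σ, Subgroup.mem_zpowers σ⟩,
    fun h g => (Subgroup.zpowers_le.mpr h : Subgroup.zpowers σ ≤ MulAction.stabilizer _ x) g.2⟩

theorem adjoin_le_fixedField_zpowers {σ : E ≃ₐ[F] E} {S : Set E} (h : ∀ x ∈ S, σ x = x) :
    adjoin F S ≤ fixedField (Subgroup.zpowers σ) :=
  adjoin_le_iff.mpr fun x hx => mem_fixedField_zpowers_iff_s10.mpr (h x hx)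

theorem eq_of_le_of_notMem_of_adjoin_simple_eq_top {L M : IntermediateField F E} (hLM : L ≤ M)
    {x : E} (hxM : x ∉ M) (hgen : L⟮x⟯ = ⊤) {p : L[X]} (hp : p ≠ 0) (hpx : aeval x p = 0)
    (hdeg : p.natDegree ≤ 2) : L = M := by
  have hint : IsIntegral L x := IsAlgebraic.isIntegral ⟨p, hp, hpx⟩
  have hrank : finrank L E = (minpoly L x).natDegree := by
    rw [← adjoin.finrank hint, hgen, finrank_top']
  have hpos : 0 < finrank L E := hrank ▸ minpoly.natDegree_pos hint
  have : FiniteDimensional L E := Module.finite_of_finrank_pos hpos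
  have hLE : finrank L E ≤ 2 :=
    hrank ▸ (natDegree_le_natDegree (minpoly.degree_le_of_ne_zero L x hp hpx)).trans hdeg
  have hME : finrank M E ≠ 1 := fun h => hxM (finrank_eq_one_iff_eq_top.mp h ▸ mem_top)
  have hME' : 0 < finrank M E := Nat.pos_of_dvd_of_pos (finrank_dvd_of_le_left hLM) hpos
  exact eq_of_le_of_finrank_le' hLM (by omega)

end IntermediateField

namespace MvPolynomial

variable {σ k : Type*} [Field k]

theorem eq_top_of_algebraMap_X_mem (F : IntermediateField k (FractionRing (MvPolynomial σ k)))
    (h : ∀ i, algebraMap (MvPolynomial σ k) (FractionRing (MvPolynomial σ k)) (X i) ∈ F) :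
    F = ⊤ := by
  have hpoly (p : MvPolynomial σ k) :
      algebraMap (MvPolynomial σ k) (FractionRing (MvPolynomial σ k)) p ∈ F := by
    induction p using MvPolynomial.induction_on with
    | C a =>
      rw [← MvPolynomial.algebraMap_eq, ← IsScalarTower.algebraMap_apply]
      exact F.algebraMap_mem a
    | add p q hp hq => rw [map_add]; exact F.add_mem hp hq
    | mul_X p i hp => rw [map_mul]; exact F.mul_mem hp (h i)
  refine eq_top_iff.mpr fun x _ => ?_
  obtain ⟨p, q, -, rfl⟩ := IsFractionRing.div_surjective (A := MvPolynomial σ k) x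
  exact F.div_mem (hpoly p) (hpoly q)

theorem aeval_algebraMap_X_ne_zero_of_eval_ne_zero (x : σ → k) {p : MvPolynomial σ k}
    (h : eval x p ≠ 0) :
    aeval (fun i => algebraMap (MvPolynomial σ k) (FractionRing (MvPolynomial σ k)) (X i)) p ≠
      0 := by
  rw [← IsScalarTower.coe_toAlgHom' k, ← comp_aeval_apply, aeval_X_left_apply]
  exact (map_ne_zero_iff _ (IsFractionRing.injective _ _)).mpr fun hp => h (by simp [hp])

end MvPolynomial

section Identities

variable {K : Type*} [Field K] {a b : K}

theorem inv_sub_inv_div_one_sub_inv_mul_inv (ha : a ≠ 0) (hb : b ≠ 0) :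
    (a⁻¹ - b⁻¹) / (1 - a⁻¹ * b⁻¹) = (a - b) / (1 - a * b) := by
  field_simp
  rw [← neg_sub a b, ← neg_sub 1 (a * b), neg_div_neg_eq]

theorem inv_add_inv_div_one_add_inv_mul_inv (ha : a ≠ 0) (hb : b ≠ 0) :
    (a⁻¹ + b⁻¹) / (1 + a⁻¹ * b⁻¹) = (a + b) / (1 + a * b) := by
  field_simp
  ring

theorem add_inv_eq_two_mul_one_add_mul_div_add (h2 : (2 : K) ≠ 0) (ha : a ≠ 0)
    (hb : 1 - b ^ 2 ≠ 0) (hm : 1 - a * b ≠ 0) (hp : 1 + a * b ≠ 0) :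
    a + a⁻¹ = 2 * (1 + (a - b) / (1 - a * b) * ((a + b) / (1 + a * b))) /
      ((a - b) / (1 - a * b) + (a + b) / (1 + a * b)) := by
  have hmp := mul_ne_zero hm hp
  have hsum : (a - b) / (1 - a * b) + (a + b) / (1 + a * b) =
      2 * a * (1 - b ^ 2) / ((1 - a * b) * (1 + a * b)) := by
    rw [div_add_div _ _ hm hp]
    ring
  have hprod : 1 + (a - b) / (1 - a * b) * ((a + b) / (1 + a * b)) =
      (1 + a ^ 2) * (1 - b ^ 2) / ((1 - a * b) * (1 + a * b)) := by
    rw [div_mul_div_comm, one_add_div hmp]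
    ring
  rw [hsum, hprod, mul_div_assoc', div_div_div_cancel_right₀ hmp]
  field_simp
  ring

theorem eq_sub_div_one_sub_mul (ha : 1 - a ^ 2 ≠ 0) (hm : 1 - a * b ≠ 0) :
    b = (a - (a - b) / (1 - a * b)) / (1 - (a - b) / (1 - a * b) * a) := by
  have hden : 1 - (a - b) / (1 - a * b) * a = (1 - a ^ 2) / (1 - a * b) := by
    field_simp
    ring
  have hnum : a - (a - b) / (1 - a * b) = b * (1 - a ^ 2) / (1 - a * b) := by
    rw [eq_div_iff hm, sub_mul, div_mul_cancel₀ _ hm]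
    ring
  rw [hnum, hden, mul_div_assoc, mul_div_cancel_right₀ _ (div_ne_zero ha hm)]

theorem eq_mul_one_add_one_div_mul_div (c : K) (ha : a ≠ 0) (ha' : a + 1 ≠ 0) :
    c = c * (1 + 1 / a) * a / (a + 1) := by
  field_simp

end Identities

section FixedField

variable {k K : Type*} [Field k] [Field K] [Algebra k K] {u₁ u₂ u₃ : K}

theorem adjoin_simple_eq_top_of_mem {L : IntermediateField k K}
    (hgen : adjoin k {u₁, u₂, u₃} = ⊤) (hu₁ : u₁ ≠ 0) (hu₁' : 1 - u₁ ^ 2 ≠ 0)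
    (hm : 1 - u₁ * u₂ ≠ 0) (hv₁ : (u₁ - u₂) / (1 - u₁ * u₂) ∈ L) (hv₃ : u₃ * (1 + 1 / u₁) ∈ L) :
    L⟮u₁⟯ = ⊤ := by
  have hu₁1 : u₁ + 1 ≠ 0 := fun h => hu₁' (by linear_combination (1 - u₁) * h)
  have hL {y : K} (hy : y ∈ L) : y ∈ L⟮u₁⟯ := (L⟮u₁⟯).algebraMap_mem ⟨y, hy⟩
  have hu : u₁ ∈ L⟮u₁⟯ := mem_adjoin_simple_self L u₁
  rw [← restrictScalars_eq_top_iff (K := k), eq_top_iff, ← hgen, adjoin_le_iff]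
  simp only [Set.insert_subset_iff, Set.singleton_subset_iff, SetLike.mem_coe, mem_restrictScalars]
  refine ⟨hu, ?_, ?_⟩
  · rw [eq_sub_div_one_sub_mul hu₁' hm]
    exact div_mem (sub_mem hu (hL hv₁)) (sub_mem (one_mem _) (mul_mem (hL hv₁) hu))
  · rw [eq_mul_one_add_one_div_mul_div u₃ hu₁ hu₁1]
    exact div_mem (mul_mem (hL hv₃) hu) (add_mem hu (one_mem _))

theorem exists_aeval_eq_zero_natDegree_le_two {L : IntermediateField k K} (h2 : (2 : K) ≠ 0)
    (hu₁ : u₁ ≠ 0) (hu₂' : 1 - u₂ ^ 2 ≠ 0) (hm : 1 - u₁ * u₂ ≠ 0) (hp : 1 + u₁ * u₂ ≠ 0)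
    (hv₁ : (u₁ - u₂) / (1 - u₁ * u₂) ∈ L) (hv₂ : (u₁ + u₂) / (1 + u₁ * u₂) ∈ L) :
    ∃ p : L[X], p ≠ 0 ∧ aeval u₁ p = 0 ∧ p.natDegree ≤ 2 := by
  have hs : u₁ + u₁⁻¹ ∈ L := by
    rw [add_inv_eq_two_mul_one_add_mul_div_add h2 hu₁ hu₂' hm hp]
    exact div_mem (mul_mem (ofNat_mem L 2) (add_mem (one_mem L) (mul_mem hv₁ hv₂)))
      (add_mem hv₁ hv₂)
  refine ⟨X ^ 2 - C ⟨_, hs⟩ * X + 1, Monic.ne_zero (by monicity!), ?_, by compute_degree!⟩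
  simp only [map_add, map_sub, map_mul, map_pow, map_one, aeval_X, aeval_C]
  show u₁ ^ 2 - (u₁ + u₁⁻¹) * u₁ + 1 = 0
  field_simp
  ring

theorem fixedField_zpowers_eq_adjoin (hgen : adjoin k {u₁, u₂, u₃} = ⊤) (h2 : (2 : K) ≠ 0)
    (hu₁ : u₁ ≠ 0) (hu₂ : u₂ ≠ 0) (hu₁' : 1 - u₁ ^ 2 ≠ 0) (hu₂' : 1 - u₂ ^ 2 ≠ 0)
    (hm : 1 - u₁ * u₂ ≠ 0) (hp : 1 + u₁ * u₂ ≠ 0) {σ : K ≃ₐ[k] K}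
    (hσ₁ : σ u₁ = 1 / u₁) (hσ₂ : σ u₂ = 1 / u₂) (hσ₃ : σ u₃ = u₃ / u₁) :
    fixedField (Subgroup.zpowers σ) =
      adjoin k {(u₁ - u₂) / (1 - u₁ * u₂), (u₁ + u₂) / (1 + u₁ * u₂), u₃ * (1 + 1 / u₁)} := by
  set L := adjoin k {(u₁ - u₂) / (1 - u₁ * u₂), (u₁ + u₂) / (1 + u₁ * u₂), u₃ * (1 + 1 / u₁)}
  have hv₁ : (u₁ - u₂) / (1 - u₁ * u₂) ∈ L := subset_adjoin k _ (by simp)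
  have hv₂ : (u₁ + u₂) / (1 + u₁ * u₂) ∈ L := subset_adjoin k _ (by simp)
  have hv₃ : u₃ * (1 + 1 / u₁) ∈ L := subset_adjoin k _ (by simp)
  have hLM : L ≤ fixedField (Subgroup.zpowers σ) := by
    refine adjoin_le_fixedField_zpowers ?_
    simp only [Set.mem_insert_iff, Set.mem_singleton_iff, forall_eq_or_imp, forall_eq, map_div₀,
      map_sub, map_add, map_mul, map_one, map_inv₀, hσ₁, hσ₂, hσ₃, one_div, inv_inv]
    refine ⟨inv_sub_inv_div_one_sub_inv_mul_inv hu₁ hu₂,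
      inv_add_inv_div_one_add_inv_mul_inv hu₁ hu₂, ?_⟩
    field_simp
    ring
  have hu₁M : u₁ ∉ fixedField (Subgroup.zpowers σ) := by
    rw [mem_fixedField_zpowers_iff_s10, hσ₁]
    intro h
    exact hu₁' (by field_simp at h; linear_combination h)
  obtain ⟨p, hp0, hpx, hdeg⟩ := exists_aeval_eq_zero_natDegree_le_two h2 hu₁ hu₂' hm hp hv₁ hv₂
  exact (eq_of_le_of_notMem_of_adjoin_simple_eq_top hLM hu₁M
    (adjoin_simple_eq_top_of_mem hgen hu₁ hu₁' hm hv₁ hv₃) hp0 hpx hdeg).symm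

end FixedField

/-- Let `char k ≠ 2` and `σ` the `k`-automorphism of `k(u₁,u₂,u₃)` with `σ(u₁)=1/u₁`,
`σ(u₂)=1/u₂`, `σ(u₃)=u₃/u₁`. Then `k(u₁,u₂,u₃)^⟨σ⟩ = k(v₁,v₂,v₃)` with
`v₁=(u₁-u₂)/(1-u₁u₂)`, `v₂=(u₁+u₂)/(1+u₁u₂)`, `v₃=u₃(1+1/u₁)`. -/
theorem stmt_10 {k : Type*} [Field k] (hchar : ringChar k ≠ 2)
    (u₁ u₂ u₃ : FractionRing (MvPolynomial (Fin 3) k))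
    (h1 : u₁ = algebraMap (MvPolynomial (Fin 3) k) (FractionRing (MvPolynomial (Fin 3) k))
      (MvPolynomial.X 0))
    (h2 : u₂ = algebraMap (MvPolynomial (Fin 3) k) (FractionRing (MvPolynomial (Fin 3) k))
      (MvPolynomial.X 1))
    (h3 : u₃ = algebraMap (MvPolynomial (Fin 3) k) (FractionRing (MvPolynomial (Fin 3) k))
      (MvPolynomial.X 2))
    (σ : FractionRing (MvPolynomial (Fin 3) k) ≃ₐ[k] FractionRing (MvPolynomial (Fin 3) k))
    (hσ1 : σ u₁ = 1 / u₁) (hσ2 : σ u₂ = 1 / u₂) (hσ3 : σ u₃ = u₃ / u₁) :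
    IntermediateField.fixedField (Subgroup.zpowers σ) =
      IntermediateField.adjoin k
        {(u₁ - u₂) / (1 - u₁ * u₂), (u₁ + u₂) / (1 + u₁ * u₂), u₃ * (1 + 1 / u₁)} := by
  have hgen : adjoin k {u₁, u₂, u₃} = ⊤ :=
    MvPolynomial.eq_top_of_algebraMap_X_mem _ fun i =>
      subset_adjoin k _ (by fin_cases i <;> simp [h1, h2, h3])
  subst h1 h2 h3
  have h2K : (2 : FractionRing (MvPolynomial (Fin 3) k)) ≠ 0 := by
    simpa [map_ofNat] using (algebraMap k (FractionRing (MvPolynomial (Fin 3) k))).injective.ne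
      (Ring.two_ne_zero hchar)
  have hne (p : MvPolynomial (Fin 3) k) (hp : MvPolynomial.eval 0 p ≠ 0) :=
    MvPolynomial.aeval_algebraMap_X_ne_zero_of_eval_ne_zero 0 hp
  refine fixedField_zpowers_eq_adjoin hgen h2K (by simp) (by simp) ?_ ?_ ?_ ?_ hσ1 hσ2 hσ3
  · simpa using (hne (1 - .X 0 ^ 2) (by simp) :)
  · simpa using (hne (1 - .X 1 ^ 2) (by simp) :)
  · simpa using (hne (1 - .X 0 * .X 1) (by simp) :)
  · simpa using (hne (1 + .X 0 * .X 1) (by simp) :)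
end

section
/- Let $k$ be a field of characteristic $\neq 2$, and let $F = k(w_1, w_2, w_3, w_4)$ where $w_2, w_3, w_4$ are algebraically independent over $k$ and $w_3^2 + w_4^2 = 2(-1 + 2w_1 + 3w_2^2)(w_1 + 2w_2^2)$. Then $F$ is purely transcendental over $k$: setting $t_3 = w_3/(w_1 + 2w_2^2)$ and $t_4 = w_4/(w_1 + 2w_2^2)$ one has $F = k(w_2, t_3, t_4)$. -/
/-!
With `d = w₁ + 2w₂²` and `s = t₃² + t₄²`, dividing the relation by `d²` gives
`s d = 2(-1 + 2w₁ + 3w₂²)`, which is linear in `w₁` and solves to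
`w₁ = (-2 + (6 - 2s)w₂²)/(s - 4)`. The denominator cannot vanish: `s = 4` would force
`2(w₂² + 1) = 0`, impossible for `w₂` transcendental when `char k ≠ 2`. So `w₁`, then `d`, and
then `w₃ = t₃ d`, `w₄ = t₄ d` lie in `k(w₂, t₃, t₄)`; the other inclusion is clear.
-/

open IntermediateField

theorem Transcendental.sq_ne_neg_one {R A : Type*} [CommRing R] [Nontrivial R] [Ring A]
    [Algebra R A] {x : A} (hx : Transcendental R x) : x ^ 2 ≠ -1 := fun h ↦
  hx.pow two_pos <| h ▸ by exact_mod_cast isAlgebraic_intCast (R := R) (A := A) (-1)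

section

variable {K : Type*} [Field K] {w₁ w₂ w₃ w₄ : K}

theorem div_sq_add_div_sq_mul_eq (hne : w₁ + 2 * w₂ ^ 2 ≠ 0)
    (hrel : w₃ ^ 2 + w₄ ^ 2 = 2 * (-1 + 2 * w₁ + 3 * w₂ ^ 2) * (w₁ + 2 * w₂ ^ 2)) :
    ((w₃ / (w₁ + 2 * w₂ ^ 2)) ^ 2 + (w₄ / (w₁ + 2 * w₂ ^ 2)) ^ 2) * (w₁ + 2 * w₂ ^ 2) =
      2 * (-1 + 2 * w₁ + 3 * w₂ ^ 2) := by
  field_simp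
  linear_combination hrel

theorem eq_div_sub_four_of_mul_eq {s : K} (h2 : (2 : K) ≠ 0) (hw₂ : w₂ ^ 2 ≠ -1)
    (h : s * (w₁ + 2 * w₂ ^ 2) = 2 * (-1 + 2 * w₁ + 3 * w₂ ^ 2)) :
    w₁ = (-2 + (6 - 2 * s) * w₂ ^ 2) / (s - 4) := by
  have hs : s - 4 ≠ 0 := by
    intro hs
    refine hw₂ (mul_left_cancel₀ h2 ?_)
    linear_combination h - (w₁ + 2 * w₂ ^ 2) * hs
  rw [eq_div_iff hs]
  linear_combination h

end

/-- Final step of Case 3: if `w₂, w₃, w₄` are algebraically independent over `k`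
(`char k ≠ 2`) and `w₃² + w₄² = 2(-1 + 2w₁ + 3w₂²)(w₁ + 2w₂²)` with `w₁ + 2w₂² ≠ 0`, then
with `t₃ = w₃/(w₁+2w₂²)`, `t₄ = w₄/(w₁+2w₂²)` we have
`k(w₁,w₂,w₃,w₄) = k(w₂,t₃,t₄)`, purely transcendental over `k`. -/
theorem stmt_14 {k K : Type*} [Field k] [Field K] [Algebra k K] (hchar : ringChar k ≠ 2)
    (w₁ w₂ w₃ w₄ : K)
    (hindep : AlgebraicIndependent k ![w₂, w₃, w₄])
    (hne : w₁ + 2 * w₂ ^ 2 ≠ 0)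
    (hrel : w₃ ^ 2 + w₄ ^ 2 = 2 * (-1 + 2 * w₁ + 3 * w₂ ^ 2) * (w₁ + 2 * w₂ ^ 2)) :
    IntermediateField.adjoin k {w₁, w₂, w₃, w₄} =
      IntermediateField.adjoin k
        {w₂, w₃ / (w₁ + 2 * w₂ ^ 2), w₄ / (w₁ + 2 * w₂ ^ 2)} := by
  have h2 : (2 : K) ≠ 0 := Ring.two_ne_zero (Algebra.ringChar_eq k K ▸ hchar)
  have hw₂ : w₂ ^ 2 ≠ -1 := (hindep.transcendental 0).sq_ne_neg_one
  have hw₁ := eq_div_sub_four_of_mul_eq h2 hw₂ (div_sq_add_div_sq_mul_eq hne hrel)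
  set d := w₁ + 2 * w₂ ^ 2
  set t₃ := w₃ / d
  set t₄ := w₄ / d
  set M := adjoin k {w₁, w₂, w₃, w₄}
  set L := adjoin k {w₂, t₃, t₄}
  have hw₂L : w₂ ∈ L := subset_adjoin k _ (by simp)
  have ht₃L : t₃ ∈ L := subset_adjoin k _ (by simp)
  have ht₄L : t₄ ∈ L := subset_adjoin k _ (by simp)
  have hw₁L : w₁ ∈ L := by
    have hsL : t₃ ^ 2 + t₄ ^ 2 ∈ L := add_mem (pow_mem ht₃L 2) (pow_mem ht₄L 2)
    rw [hw₁]
    exact div_mem (add_mem (neg_mem (ofNat_mem L 2)) (mul_mem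
      (sub_mem (ofNat_mem L 6) (mul_mem (ofNat_mem L 2) hsL)) (pow_mem hw₂L 2)))
      (sub_mem hsL (ofNat_mem L 4))
  have hdL : d ∈ L := add_mem hw₁L (mul_mem (ofNat_mem L 2) (pow_mem hw₂L 2))
  have hdM : d ∈ M := add_mem (subset_adjoin k _ (by simp))
    (mul_mem (ofNat_mem M 2) (pow_mem (subset_adjoin k _ (by simp)) 2))
  refine le_antisymm (adjoin_le_iff.2 ?_) (adjoin_le_iff.2 ?_)
  · rintro x (rfl | rfl | rfl | rfl)
    exacts [hw₁L, hw₂L, div_mul_cancel₀ x hne ▸ mul_mem ht₃L hdL,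
      div_mul_cancel₀ x hne ▸ mul_mem ht₄L hdL]
  · rintro x (rfl | rfl | rfl)
    exacts [subset_adjoin k _ (by simp), div_mem (subset_adjoin k _ (by simp)) hdM,
      div_mem (subset_adjoin k _ (by simp)) hdM]
end
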